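/- Let Γ be a finite connected graph and let λ, λ' : E(Γ) → ℤ \ {0} be two labelings with |λ(e)| = |λ'(e)| for all edges e. If the orientation homomorphisms H_1(Γ) → {±1} induced by λ and λ' agree (i.e., for every cycle, the sign of ∏ λ(ē_i)/λ(e_i) equals the sign of ∏ λ'(ē_i)/λ'(e_i)), then λ' can be obtained from λ by a sequence of admissible sign changes. -/

import Mathlib

/-!
Write `lab' e = ε e * lab e` with signs `ε e = ±1`. Along a closed path the two moduli differ
by the product of `δ e = ε ē / ε e`, so equal orientation homomorphisms say that the
`ℤˣ`-valued 1-cochain `δ` has trivial product around every closed path. On a connected graph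
such a cochain is a coboundary, `δ e = μ(ι ē) / μ(ι e)`, with `μ v` the product of `δ` along a
chosen walk from a base point to `v`. Then `η e = ε e / μ(ι e)` is invariant under reversal and
`lab' = η · (μ ∘ ι) · lab`.
-/

/-- A closed edge path in a graph with vertex map ι and reversal bar. -/
def IsClosedPath {V E : Type*} (ι : E → V) (bar : E → E) (l : List E) : Prop :=
  l ≠ [] ∧ ∀ i : Fin l.length,
    ι (bar (l.get i)) = ι (l.get ⟨(i.1 + 1) % l.length, Nat.mod_lt _ i.pos⟩)

/-- The modulus ∏ λ(ē_i)/λ(e_i) of an edge sequence, as a rational number. -/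
def pathModulus {V E : Type*} (ι : E → V) (bar : E → E) (lab : E → ℤ) (l : List E) : ℚ :=
  (l.map fun e => (lab (bar e) : ℚ) / (lab e : ℚ)).prod

section Walks

variable {V E : Type*} (ι : E → V) (bar : E → E)

def IsWalk : V → V → List E → Prop
  | a, b, [] => a = b
  | a, b, e :: l => ι e = a ∧ IsWalk (ι (bar e)) b l

variable {ι bar}

theorem IsWalk.append {a b c : V} {l l' : List E} (h : IsWalk ι bar a b l)
    (h' : IsWalk ι bar b c l') : IsWalk ι bar a c (l ++ l') := by
  induction l generalizing a with
  | nil => cases h; exact h'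
  | cons e l ih => exact ⟨h.1, ih h.2⟩

theorem IsWalk.reverse (hbar : ∀ e, bar (bar e) = e) {a b : V} {l : List E}
    (h : IsWalk ι bar a b l) : IsWalk ι bar b a (l.map bar).reverse := by
  induction l generalizing a with
  | nil => exact (show a = b from h).symm
  | cons e l ih =>
    rw [List.map_cons, List.reverse_cons]
    exact (ih h.2).append ⟨rfl, by rw [hbar]; exact h.1⟩

theorem IsWalk.head_eq {a b : V} {l : List E} (h : IsWalk ι bar a b l) (hl : l ≠ []) :
    ι (l.head hl) = a := by
  cases l with
  | nil => exact absurd rfl hl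
  | cons e l => exact h.1

theorem IsWalk.getLast_eq {a b : V} {l : List E} (h : IsWalk ι bar a b l) (hl : l ≠ []) :
    ι (bar (l.getLast hl)) = b := by
  induction l generalizing a with
  | nil => exact absurd rfl hl
  | cons e l ih =>
    cases l with
    | nil => exact h.2
    | cons e' l => exact ih h.2 (List.cons_ne_nil _ _)

theorem IsWalk.getElem_succ {a b : V} {l : List E} (h : IsWalk ι bar a b l) (i : ℕ)
    (hi : i + 1 < l.length) : ι (bar l[i]) = ι l[i + 1] := by
  induction l generalizing a i with
  | nil => simp at hi
  | cons e l ih =>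
    cases i with
    | zero =>
      cases l with
      | nil => simp at hi
      | cons e' l => exact h.2.1.symm
    | succ i => exact ih h.2 i (by simpa using hi)

theorem IsWalk.isClosedPath {v : V} {l : List E} (h : IsWalk ι bar v v l) (hl : l ≠ []) :
    IsClosedPath ι bar l := by
  refine ⟨hl, fun ⟨i, hi⟩ => ?_⟩
  simp only [List.get_eq_getElem]
  rcases Nat.lt_or_ge (i + 1) l.length with hlt | hge
  · simp only [Nat.mod_eq_of_lt hlt]
    exact h.getElem_succ i hlt
  · have hlast : i = l.length - 1 := by omega
    subst hlast
    simp only [Nat.sub_add_cancel (List.length_pos_iff.2 hl), Nat.mod_self]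
    rw [← List.getLast_eq_getElem hl, ← List.head_eq_getElem hl, h.head_eq, h.getLast_eq]

theorem exists_isWalk_of_reflTransGen {u v : V}
    (h : Relation.ReflTransGen (fun a b => ∃ e, ι e = a ∧ ι (bar e) = b) u v) :
    ∃ l, IsWalk ι bar u v l := by
  induction h with
  | refl => exact ⟨[], rfl⟩
  | tail _ hstep ih =>
    obtain ⟨l, hl⟩ := ih
    obtain ⟨e, he, he'⟩ := hstep
    exact ⟨l ++ [e], hl.append ⟨he, he'⟩⟩

theorem exists_coboundary_eq_of_prod_closedPath_eq_one {G : Type*} [CommGroup G]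
    (hbar : ∀ e, bar (bar e) = e)
    (hconn : ∀ u v : V,
      Relation.ReflTransGen (fun a b => ∃ e, ι e = a ∧ ι (bar e) = b) u v)
    (δ : E → G) (hδ : ∀ e, δ (bar e) = (δ e)⁻¹)
    (hcyc : ∀ l, IsClosedPath ι bar l → (l.map δ).prod = 1) :
    ∃ μ : V → G, ∀ e, δ e = μ (ι (bar e)) / μ (ι e) := by
  rcases isEmpty_or_nonempty V with hV | hV
  · have : IsEmpty E := Function.isEmpty ι
    exact ⟨1, isEmptyElim⟩
  obtain ⟨v₀⟩ := hV
  choose w hw using fun v => exists_isWalk_of_reflTransGen (hconn v₀ v)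
  refine ⟨fun v => ((w v).map δ).prod, fun e => ?_⟩
  have hrev : (((w (ι (bar e))).map bar).reverse.map δ).prod =
      ((w (ι (bar e))).map δ).prod⁻¹ := by
    simp only [List.map_reverse, List.prod_reverse, List.map_map, Function.comp_def, hδ,
      List.prod_inv]
  -- The closed walk goes out to `ι e` along its chosen walk, crosses `e`, and returns to `v₀`.
  have hloop := hcyc _ ((((hw (ι e)).append (show IsWalk ι bar (ι e) (ι (bar e)) [e] from
    ⟨rfl, rfl⟩)).append ((hw (ι (bar e))).reverse hbar)).isClosedPath (by simp))
  rw [List.map_append, List.prod_append, hrev, mul_inv_eq_one, List.map_append,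
    List.prod_append, List.map_singleton, List.prod_singleton] at hloop
  dsimp only
  rw [← hloop, mul_div_cancel_left]

end Walks

theorem Int.cast_units_div {α : Type*} [DivisionRing α] (u v : ℤˣ) :
    (((u / v : ℤˣ) : ℤ) : α) = (u : α) / (v : α) := by
  rcases Int.units_eq_one_or u with rfl | rfl <;> rcases Int.units_eq_one_or v with rfl | rfl <;>
    norm_num

theorem pathModulus_units_mul {V E : Type*} (ι : E → V) (bar : E → E) (lab : E → ℤ)
    (ε : E → ℤˣ) (l : List E) :
    pathModulus ι bar (fun e => ε e * lab e) l =
      (((l.map fun e => ε (bar e) / ε e).prod : ℤˣ) : ℤ) * pathModulus ι bar lab l := by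
  induction l with
  | nil => simp [pathModulus]
  | cons e l ih =>
    simp only [pathModulus, List.map_cons, List.prod_cons] at ih ⊢
    rw [ih]
    push_cast [Units.val_mul, Int.cast_units_div]
    ring

theorem pathModulus_ne_zero {V E : Type*} (ι : E → V) (bar : E → E) {lab : E → ℤ}
    (hlab : ∀ e, lab e ≠ 0) (l : List E) : pathModulus ι bar lab l ≠ 0 :=
  List.prod_ne_zero (by simp [hlab])

theorem Int.units_eq_one_of_pos_iff_pos_mul {α : Type*} [Ring α] [LinearOrder α]
    [IsStrictOrderedRing α] {u : ℤˣ} {q : α} (hq : q ≠ 0)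
    (h : 0 < q ↔ 0 < ((u : ℤ) : α) * q) : u = 1 := by
  rcases Int.units_eq_one_or u with rfl | rfl
  · rfl
  · simp only [Units.val_neg, Units.val_one, Int.cast_neg, Int.cast_one, neg_one_mul,
      neg_pos] at h
    exact (hq.lt_or_gt.elim (fun hneg => (h.2 hneg).not_gt hneg)
      fun hpos => (h.1 hpos).not_gt hpos).elim

theorem stmt_7_general {V E : Type*}
    (ι : E → V) (bar : E → E)
    (hbar : ∀ e, bar (bar e) = e)
    (hconn : ∀ u v : V,
      Relation.ReflTransGen (fun a b => ∃ e, ι e = a ∧ ι (bar e) = b) u v)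
    (lab lab' : E → ℤ)
    (hlab : ∀ e, lab e ≠ 0)
    (habs : ∀ e, |lab e| = |lab' e|)
    (horient : ∀ l : List E, IsClosedPath ι bar l →
      (0 < pathModulus ι bar lab l ↔ 0 < pathModulus ι bar lab' l)) :
    ∃ (η : E → ℤˣ) (μ : V → ℤˣ),
      (∀ e, η (bar e) = η e) ∧
      ∀ e, lab' e = (η e : ℤ) * (μ (ι e) : ℤ) * lab e := by
  choose ε hε using fun e => Int.associated_iff.2 (abs_eq_abs.1 (habs e))
  have hlab'_eq : lab' = fun e => ε e * lab e := funext fun e => by rw [← hε, mul_comm]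
  obtain ⟨μ, hμ⟩ := exists_coboundary_eq_of_prod_closedPath_eq_one hbar hconn
    (fun e => ε (bar e) / ε e) (fun e => by simp only [hbar, inv_div])
    fun l hl => Int.units_eq_one_of_pos_iff_pos_mul (pathModulus_ne_zero ι bar hlab l) <| by
      rw [← pathModulus_units_mul, ← hlab'_eq]; exact horient l hl
  refine ⟨fun e => ε e / μ (ι e), μ, fun e => ?_, fun e => ?_⟩
  · exact div_eq_div_iff_div_eq_div.2 (hμ e)
  · rw [← Units.val_mul, div_mul_cancel, hlab'_eq]

/-- Lemma 2.5: two labelings of a finite connected graph with the same absolute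
values and the same orientation homomorphism differ by admissible sign changes,
i.e. by a sign η(e) = η(ē) on each geometric edge together with a sign μ(v) on
each vertex applied to all edges originating at v. -/
theorem stmt_7 {V E : Type*} [Fintype V] [Fintype E]
    (ι : E → V) (bar : E → E)
    (hbar : ∀ e, bar (bar e) = e) (hfix : ∀ e, bar e ≠ e)
    (hconn : ∀ u v : V,
      Relation.ReflTransGen (fun a b => ∃ e, ι e = a ∧ ι (bar e) = b) u v)
    (lab lab' : E → ℤ)
    (hlab : ∀ e, lab e ≠ 0) (hlab' : ∀ e, lab' e ≠ 0)
    (habs : ∀ e, |lab e| = |lab' e|)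
    (horient : ∀ l : List E, IsClosedPath ι bar l →
      (0 < pathModulus ι bar lab l ↔ 0 < pathModulus ι bar lab' l)) :
    ∃ (η : E → ℤˣ) (μ : V → ℤˣ),
      (∀ e, η (bar e) = η e) ∧
      ∀ e, lab' e = (η e : ℤ) * (μ (ι e) : ℤ) * lab e :=
  stmt_7_general ι bar hbar hconn lab lab' hlab habs horient
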